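/- (Solution of the recursion.) Let k ≥ 1 be an integer and η ∈ [0,1]. Suppose d : ℕ × ℕ → [0,1] satisfies d(0,0) = 0 and, for all i ≥ 0 and n ≥ 0, d(i+1, n) ≤ Σ_{m=0}^{kn} C(kn, m) · η^{kn-m} (1-η)^m · d(i, m). Define f_0 = 0 and f_{i+1} = (η + (1-η)·f_i)^k. Then for all i, n ≥ 0, d(i, n) ≤ 1 - f_i^n (with the convention 0^0 = 1). -/

import Mathlib

open scoped ComplexOrder

noncomputable section

/-- The state space of `n` qubits: linear operators on `(ℂ²)^{⊗ n}`,
represented as matrices indexed by `Fin n → Fin 2`. -/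
abbrev QState (n : ℕ) := Matrix (Fin n → Fin 2) (Fin n → Fin 2) ℂ

/-- A density matrix: Hermitian (implied), positive semidefinite, trace one. -/
def IsDensityMatrix {α : Type*} [Fintype α] (ρ : Matrix α α ℂ) : Prop :=
  ρ.PosSemidef ∧ ρ.trace = 1

/-- The square root of a positive semidefinite matrix, as `Matrix.PosSemidef.sqrt` was defined
in Mathlib (December 2024); Mathlib no longer provides it. -/
noncomputable def Matrix.PosSemidef.sqrt {n : Type*} [Fintype n] [DecidableEq n]
    {A : Matrix n n ℂ} (hA : A.PosSemidef) : Matrix n n ℂ :=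
  hA.1.eigenvectorUnitary.1 * Matrix.diagonal ((↑) ∘ (Real.sqrt ∘ hA.1.eigenvalues)) *
    (star hA.1.eigenvectorUnitary : Matrix n n ℂ)

/-- The trace norm of a matrix: `tr √(Aᴴ A)`, the sum of the singular values. -/
noncomputable def traceNorm {α : Type*} [Fintype α] [DecidableEq α] (A : Matrix α α ℂ) : ℝ :=
  ((Matrix.posSemidef_conjTranspose_mul_self A).sqrt).trace.re

/-- The trace distance `D(ρ,σ) = ‖ρ - σ‖_tr / 2`. -/
noncomputable def traceDist {α : Type*} [Fintype α] [DecidableEq α] (ρ σ : Matrix α α ℂ) : ℝ :=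
  traceNorm (ρ - σ) / 2

/-- The extension `T ⊗ id_γ` of a linear map on matrices, acting blockwise. -/
def tensorIdMap {α β γ : Type*} (T : Matrix α α ℂ →ₗ[ℂ] Matrix β β ℂ)
    (M : Matrix (α × γ) (α × γ) ℂ) : Matrix (β × γ) (β × γ) ℂ :=
  Matrix.of fun p q => T (Matrix.of fun a a' => M (a, p.2) (a', q.2)) p.1 q.1

/-- Complete positivity: all the extensions `T ⊗ id_m` preserve positive semidefiniteness. -/
def IsCompletelyPositive {α β : Type*} [Fintype α] [Fintype β]
    (T : Matrix α α ℂ →ₗ[ℂ] Matrix β β ℂ) : Prop :=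
  ∀ (m : ℕ) (M : Matrix (α × Fin m) (α × Fin m) ℂ),
    M.PosSemidef → (tensorIdMap T M).PosSemidef

/-- A quantum operation: a trace-preserving, completely positive linear map. -/
def IsQuantumOp {α β : Type*} [Fintype α] [Fintype β]
    (T : Matrix α α ℂ →ₗ[ℂ] Matrix β β ℂ) : Prop :=
  (∀ M, (T M).trace = M.trace) ∧ IsCompletelyPositive T

/-- The depolarizing channel at rate `η` on `d × d` matrices:
`ρ ↦ (1-η) ρ + (η tr ρ / dim) I`. -/
noncomputable def depolarize (η : ℝ) (d : Type*) [Fintype d] [DecidableEq d] :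
    Matrix d d ℂ →ₗ[ℂ] Matrix d d ℂ :=
  (1 - η : ℂ) • LinearMap.id +
    (Matrix.traceLinearMap d ℂ ℂ).smulRight (((η : ℂ) / (Fintype.card d : ℂ)) • (1 : Matrix d d ℂ))

/-- Depolarization at rate `η` of the single qubit `i` of an `n`-qubit system. -/
noncomputable def depolarizeAt (η : ℝ) {n : ℕ} (i : Fin n) : QState n →ₗ[ℂ] QState n where
  toFun ρ := Matrix.of fun x y =>
    (1 - η : ℂ) * ρ x y +
      (η : ℂ) * (if x i = y i then
        (2 : ℂ)⁻¹ * ∑ b : Fin 2, ρ (Function.update x i b) (Function.update y i b) else 0)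
  map_add' ρ σ := by
    ext x y
    simp only [Matrix.of_apply, Matrix.add_apply]
    split
    · rw [Finset.sum_add_distrib]; ring
    · ring
  map_smul' c ρ := by
    ext x y
    simp only [Matrix.of_apply, Matrix.smul_apply, smul_eq_mul, RingHom.id_apply]
    split
    · rw [← Finset.mul_sum]; ring
    · ring

/-- `E_η^{⊗n}`: independent depolarization at rate `η` of each of the `n` qubits. -/
noncomputable def depolarizeN (η : ℝ) (n : ℕ) : QState n →ₗ[ℂ] QState n :=
  (List.finRange n).foldr (fun i acc => depolarizeAt η i ∘ₗ acc) LinearMap.id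

/-- `glue A x z` is the bit string on `n` qubits equal to `x` on `A` and `z` outside `A`. -/
def glue {n : ℕ} (A : Finset (Fin n)) (x : A → Fin 2) (z : {i : Fin n // i ∉ A} → Fin 2) :
    Fin n → Fin 2 :=
  fun i => if h : i ∈ A then x ⟨i, h⟩ else z ⟨i, h⟩

/-- `ptr A ρ = ρ|_A`: the partial trace of an `n`-qubit state over all the qubits outside `A`. -/
noncomputable def ptr {n : ℕ} (A : Finset (Fin n)) (ρ : QState n) :
    Matrix (A → Fin 2) (A → Fin 2) ℂ :=
  Matrix.of fun x y => ∑ z : ({i : Fin n // i ∉ A} → Fin 2), ρ (glue A x z) (glue A y z)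

/-- Given a partition of the qubits `[N]` into the fibers of `f : Fin N → Fin w` and matrices
`M ν` on the blocks, `assemble f M` is the tensor product matrix `⊗_ν M ν` on all `N` qubits. -/
def assemble {N w : ℕ} (f : Fin N → Fin w)
    (M : ∀ ν : Fin w,
      Matrix ({i : Fin N // f i = ν} → Fin 2) ({i : Fin N // f i = ν} → Fin 2) ℂ) :
    QState N :=
  Matrix.of fun x y => ∏ ν : Fin w, M ν (fun j => x j.1) (fun j => y j.1)

/-- `T` decomposes as the tensor product `⊗_ν Tb ν` of quantum gates of fan-in `≤ k`, with
respect to the partitions of the input qubits `[N]` into the fibers `K_ν` of `f` and of the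
output qubits `[N']` into the fibers `L_ν` of `g`. -/
def IsGateDecomp {N N' w : ℕ} (k : ℕ) (T : QState N →ₗ[ℂ] QState N')
    (f : Fin N → Fin w) (g : Fin N' → Fin w)
    (Tb : ∀ ν : Fin w,
      Matrix ({i : Fin N // f i = ν} → Fin 2) ({i : Fin N // f i = ν} → Fin 2) ℂ →ₗ[ℂ]
        Matrix ({i : Fin N' // g i = ν} → Fin 2) ({i : Fin N' // g i = ν} → Fin 2) ℂ) : Prop :=
  (∀ ν, IsQuantumOp (Tb ν)) ∧
  (∀ ν : Fin w, Fintype.card {i : Fin N // f i = ν} ≤ k) ∧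
  (∀ M, T (assemble f M) = assemble g fun ν => Tb ν (M ν))

/-- A quantum circuit over the gate set `G_k` of all quantum gates of fan-in `≤ k`:
a sequence of `depth` levels, with `nq i` qubits at level `i`, where each level operation
decomposes as a tensor product of quantum gates of fan-in `≤ k`. -/
structure QCircuit (k : ℕ) where
  depth : ℕ
  nq : Fin (depth + 1) → ℕ
  op : ∀ i : Fin depth, QState (nq i.castSucc) →ₗ[ℂ] QState (nq i.succ)
  isGate : ∀ i : Fin depth, ∃ (w : ℕ) (f : Fin (nq i.castSucc) → Fin w)
    (g : Fin (nq i.succ) → Fin w)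
    (Tb : ∀ ν : Fin w,
      Matrix ({j : Fin (nq i.castSucc) // f j = ν} → Fin 2)
          ({j : Fin (nq i.castSucc) // f j = ν} → Fin 2) ℂ →ₗ[ℂ]
        Matrix ({j : Fin (nq i.succ) // g j = ν} → Fin 2)
          ({j : Fin (nq i.succ) // g j = ν} → Fin 2) ℂ),
    IsGateDecomp k (op i) f g Tb

/-- The width of a circuit: the maximum number of qubits at any level. -/
def QCircuit.width {k : ℕ} (Q : QCircuit k) : ℕ := Finset.univ.sup Q.nq

/-- The first `i` levels of the perturbed circuit `Q_η`: the gates `T_0, …, T_{i-1}` interlaced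
with depolarizing noise at rate `η` on every qubit between consecutive gates. -/
noncomputable def QCircuit.runP {k : ℕ} (Q : QCircuit k) (η : ℝ) :
    (i : ℕ) → (h : i ≤ Q.depth) →
      (QState (Q.nq ⟨0, Nat.succ_pos _⟩) →ₗ[ℂ] QState (Q.nq ⟨i, Nat.lt_succ_of_le h⟩))
  | 0, _ => LinearMap.id
  | (i + 1), h =>
      Q.op ⟨i, h⟩ ∘ₗ
        (if i = 0 then LinearMap.id
          else depolarizeN η (Q.nq ⟨i, Nat.lt_succ_of_le (Nat.le_of_succ_le h)⟩)) ∘ₗ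
        Q.runP η i (Nat.le_of_succ_le h)

/-- The perturbed circuit `Q_η = T_{t-1} ∘ E_η^{⊗n_{t-1}} ∘ ⋯ ∘ E_η^{⊗n_1} ∘ T_0`. -/
noncomputable def QCircuit.perturbed {k : ℕ} (Q : QCircuit k) (η : ℝ) :
    QState (Q.nq ⟨0, Nat.succ_pos _⟩) →ₗ[ℂ] QState (Q.nq (Fin.last Q.depth)) :=
  Q.runP η Q.depth le_rfl

end

/-!
Induction on `i`. The right-hand side of the recursion is the expectation of `d(i, X)` for
`X ~ Binomial(kn, 1 - η)`, which is monotone in `d(i, ·)`; on `m ↦ 1 - x^m` it equals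
`1 - (η + (1 - η) x)^{kn}` by the binomial theorem, and with `x = f_i` this is `1 - f_{i+1}^n`.
-/

def binomialSum {R : Type*} [CommSemiring R] (a b : R) (N : ℕ) (g : ℕ → R) : R :=
  ∑ m ∈ Finset.range (N + 1), (N.choose m : R) * a ^ (N - m) * b ^ m * g m

section binomialSum

variable {R : Type*} (N : ℕ)

theorem binomialSum_pow [CommSemiring R] (a b x : R) :
    binomialSum a b N (x ^ ·) = (a + b * x) ^ N := by
  rw [add_comm, add_pow, binomialSum]
  refine Finset.sum_congr rfl fun m _ => ?_
  ring

theorem binomialSum_mono [CommSemiring R] [PartialOrder R] [IsOrderedRing R]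
    {a b : R} (ha : 0 ≤ a) (hb : 0 ≤ b) {g h : ℕ → R} (hgh : ∀ m, g m ≤ h m) :
    binomialSum a b N g ≤ binomialSum a b N h :=
  Finset.sum_le_sum fun m _ => mul_le_mul_of_nonneg_left (hgh m) (by positivity)

theorem binomialSum_one_sub_pow [CommRing R] {a b : R} (hab : a + b = 1) (x : R) :
    binomialSum a b N (fun m => 1 - x ^ m) = 1 - (a + b * x) ^ N := by
  have hsub : binomialSum a b N (fun m => 1 - x ^ m) =
      binomialSum a b N (1 ^ ·) - binomialSum a b N (x ^ ·) := by
    simp only [binomialSum, ← Finset.sum_sub_distrib, one_pow, mul_sub, mul_one]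
  rw [hsub, binomialSum_pow, binomialSum_pow, mul_one, hab, one_pow]

end binomialSum

theorem recursion_solution_general (k : ℕ) (η : ℝ) (hη : η ∈ Set.Icc (0 : ℝ) 1)
    (d : ℕ → ℕ → ℝ) (hd01 : ∀ i n, d i n ∈ Set.Icc (0 : ℝ) 1) (hd00 : d 0 0 = 0)
    (hrec : ∀ i n, d (i + 1) n ≤
      ∑ m ∈ Finset.range (k * n + 1),
        ((k * n).choose m : ℝ) * η ^ (k * n - m) * (1 - η) ^ m * d i m)
    (f : ℕ → ℝ) (hf0 : f 0 = 0) (hf : ∀ i, f (i + 1) = (η + (1 - η) * f i) ^ k) :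
    ∀ i n, d i n ≤ 1 - (f i) ^ n := by
  intro i
  induction i with
  | zero =>
    rintro (_ | n)
    · simp [hd00]
    · simpa [hf0] using (hd01 0 (n + 1)).2
  | succ i ih =>
    intro n
    calc d (i + 1) n ≤ binomialSum η (1 - η) (k * n) (d i) := hrec i n
      _ ≤ binomialSum η (1 - η) (k * n) (fun m => 1 - f i ^ m) :=
        binomialSum_mono _ hη.1 (sub_nonneg.2 hη.2) ih
      _ = 1 - f (i + 1) ^ n := by
        rw [binomialSum_one_sub_pow _ (add_sub_cancel η 1), hf, pow_mul]

/-- **Solution of the recursion.** If `d : ℕ × ℕ → [0,1]` satisfies `d(0,0) = 0` and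
`d(i+1, n) ≤ Σ_{m=0}^{kn} C(kn,m) η^{kn-m} (1-η)^m d(i, m)`, and `f_0 = 0`,
`f_{i+1} = (η + (1-η) f_i)^k`, then `d(i, n) ≤ 1 - f_i^n` (with `0^0 = 1`). -/
theorem recursion_solution (k : ℕ) (hk : 1 ≤ k) (η : ℝ) (hη : η ∈ Set.Icc (0 : ℝ) 1)
    (d : ℕ → ℕ → ℝ) (hd01 : ∀ i n, d i n ∈ Set.Icc (0 : ℝ) 1) (hd00 : d 0 0 = 0)
    (hrec : ∀ i n, d (i + 1) n ≤
      ∑ m ∈ Finset.range (k * n + 1),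
        ((k * n).choose m : ℝ) * η ^ (k * n - m) * (1 - η) ^ m * d i m)
    (f : ℕ → ℝ) (hf0 : f 0 = 0) (hf : ∀ i, f (i + 1) = (η + (1 - η) * f i) ^ k) :
    ∀ i n, d i n ≤ 1 - (f i) ^ n :=
  recursion_solution_general k η hη d hd01 hd00 hrec f hf0 hf
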